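/- arXiv:1004.2374 — 2 statements merged into one kernel-verified Lean document; each statement's English description precedes it below -/
import Mathlib

section
/- For the vectorial boolean negation f_0(x_1,…,x_N) = (x̄_1,…,x̄_N), the map G_{f_0} on (X,d) is topologically transitive: for any pair of nonempty open sets U, V ⊆ X there exists k > 0 such that G_{f_0}^k(U) ∩ V ≠ ∅. -/
/-! Under `G_{f_0}` every step shifts the strategy and flips the state coordinate named by its
first term. Given `x = (S, E)` and `y = (T, F)`, run the strategy that copies the first `n` terms
of `S` (so it is `10^{-n}`-close to `S` for `d_s`), then a nonempty list of indices whose flips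
carry the state reached so far to `F`, then continues with `T`: after the finite prefix the
orbit is exactly at `y`. -/

open Finset

/-- The state distance `d_e`: number of differing boolean components (Hamming distance). -/
def de (N : ℕ) (E F : Fin N → Bool) : ℕ := hammingDist E F

/-- The strategy distance `d_s(S,Š) = (9/N) Σ_{k=1}^∞ |S^k − Š^k|/10^k`
(strategies are 0-indexed here, so term `k` of the sequence gets weight `10^{-(k+1)}`). -/
noncomputable def ds (N : ℕ) (S T : ℕ → Fin N) : ℝ :=
  (9 / N) * ∑' k : ℕ, |((S k : ℕ) : ℝ) - ((T k : ℕ) : ℝ)| / 10 ^ (k + 1)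

/-- The distance `d = d_e + d_s` on `X = ⟦1;N⟧^ℕ × 𝔹^N`. -/
noncomputable def dX (N : ℕ) (x y : (ℕ → Fin N) × (Fin N → Bool)) : ℝ :=
  (de N x.2 y.2 : ℝ) + ds N x.1 y.1

/-- `F_f(k,E)`: the vector equal to `E` except the `k`-th component, which becomes `f(E)_k`. -/
def Ff (N : ℕ) (f : (Fin N → Bool) → (Fin N → Bool)) (k : Fin N)
    (E : Fin N → Bool) : Fin N → Bool :=
  fun j => if j = k then f E k else E j

/-- `G_f(S,E) = (σ(S), F_f(i(S),E))`, with `σ` the shift and `i(S) = S^0`. -/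
noncomputable def Gf (N : ℕ) (f : (Fin N → Bool) → (Fin N → Bool)) :
    (ℕ → Fin N) × (Fin N → Bool) → (ℕ → Fin N) × (Fin N → Bool) :=
  fun p => (fun n => p.1 (n + 1), Ff N f (p.1 0) p.2)

/-- The vectorial boolean negation `f_0`. -/
def f0 (N : ℕ) : (Fin N → Bool) → (Fin N → Bool) := fun E i => !(E i)

open Stream'

section

variable {N : ℕ}

lemma Stream'.get_take_append_stream {α : Type*} {n k : ℕ} (hk : k < n) (s t : Stream' α) :
    (s.take n ++ₛ t).get k = s.get k := by
  have hk' : k < (s.take n).length := by rwa [length_take]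
  conv_rhs => rw [← append_take_drop n s]
  rw [get_append_left k _ _ hk', get_append_left k _ _ hk']

lemma iterate_Gf_append_stream (f : (Fin N → Bool) → (Fin N → Bool)) (l : List (Fin N))
    (T : ℕ → Fin N) (E : Fin N → Bool) :
    (Gf N f)^[l.length] (l ++ₛ T, E) = (T, l.foldl (fun E k => Ff N f k E) E) := by
  induction l generalizing E with
  | nil => rfl
  | cons k l ih => exact ih _

lemma foldl_Ff_f0_of_nodup {l : List (Fin N)} (hl : l.Nodup) (E : Fin N → Bool) :
    l.foldl (fun E k => Ff N (f0 N) k E) E = fun j => if j ∈ l then !E j else E j := by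
  induction l generalizing E with
  | nil => simp
  | cons k l ih =>
    obtain ⟨hk, hl⟩ := List.nodup_cons.mp hl
    funext j
    rw [List.foldl_cons, ih hl]
    by_cases hj : j = k
    · subst hj; simp [Ff, f0, hk]
    · simp [Ff, hj]

lemma exists_foldl_Ff_f0_eq (i : Fin N) (E F : Fin N → Bool) :
    ∃ l ≠ [], l.foldl (fun E k => Ff N (f0 N) k E) E = F := by
  -- the two flips of `i` cancel; they only make the list nonempty
  refine ⟨i :: i :: (List.finRange N).filter (fun j => E j ≠ F j), by simp, ?_⟩
  have hii : Ff N (f0 N) i (Ff N (f0 N) i E) = E := by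
    funext j; by_cases hj : j = i <;> simp [Ff, f0, hj]
  rw [List.foldl_cons, List.foldl_cons, hii,
    foldl_Ff_f0_of_nodup ((List.nodup_finRange N).filter _)]
  funext j
  by_cases h : E j = F j
  · simp [h]
  · simpa [h] using Bool.eq_not_iff.mpr h

lemma dX_self (x : (ℕ → Fin N) × (Fin N → Bool)) : dX N x x = 0 := by
  simp [dX, de, ds]

lemma Fin.abs_val_sub_val_le (a b : Fin N) : |((a : ℕ) : ℝ) - ((b : ℕ) : ℝ)| ≤ N :=
  abs_sub_le_of_nonneg_of_le (by positivity) (by exact_mod_cast a.2.le) (by positivity)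
    (by exact_mod_cast b.2.le)

lemma ds_le_of_forall_lt_eq {n : ℕ} {S T : ℕ → Fin N} (h : ∀ k < n, S k = T k) :
    ds N S T ≤ (1 / 10) ^ n := by
  set g : ℕ → ℝ := fun k => |((S k : ℕ) : ℝ) - ((T k : ℕ) : ℝ)| / 10 ^ (k + 1) with hg_def
  set b : ℕ → ℝ := fun k => N / 10 * (1 / 10) ^ k with hb_def
  have hgb : ∀ k, g k ≤ b k := fun k => calc
    g k ≤ N / 10 ^ (k + 1) := by
      simp only [hg_def]; gcongr; exact Fin.abs_val_sub_val_le _ _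
    _ = b k := by simp only [hb_def, one_div, inv_pow, pow_succ]; field_simp
  have hb : Summable b := (summable_geometric_of_lt_one (by norm_num) (by norm_num)).mul_left _
  have hg : Summable g := hb.of_nonneg_of_le (fun k => by positivity) hgb
  have hhead : ∑ k ∈ Finset.range n, g k = 0 :=
    Finset.sum_eq_zero fun k hk => by simp [g, h k (Finset.mem_range.mp hk)]
  have htail : ∑' k, g (k + n) ≤ N / 9 * (1 / 10) ^ n := calc
    ∑' k, g (k + n) ≤ ∑' k, b (k + n) :=
      ((summable_nat_add_iff n).mpr hg).tsum_le_tsum (fun k => hgb _)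
        ((summable_nat_add_iff n).mpr hb)
    _ = N / 9 * (1 / 10) ^ n := by
      simp only [hb_def, pow_add, mul_comm _ ((1 / 10 : ℝ) ^ n), ← mul_assoc, tsum_mul_left,
        tsum_geometric_of_lt_one (by norm_num : (0 : ℝ) ≤ 1 / 10) (by norm_num)]
      ring
  calc ds N S T = 9 / N * ∑' k, g (k + n) := by
        rw [ds, ← hg.sum_add_tsum_nat_add n, hhead, zero_add]
    _ ≤ 9 / N * (N / 9 * (1 / 10) ^ n) := by gcongr
    _ ≤ (1 / 10) ^ n := by
      rcases N.eq_zero_or_pos with rfl | hN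
      · simp
      · rw [← mul_assoc, div_mul_div_cancel₀ (by positivity), div_self (by norm_num), one_mul]

lemma exists_iterate_Gf_f0_append_stream_eq (P : List (Fin N)) (i : Fin N) (E : Fin N → Bool)
    (T : ℕ → Fin N) (F : Fin N → Bool) :
    ∃ L ≠ [], (Gf N (f0 N))^[L.length + P.length] (P ++ₛ (L ++ₛ T), E) = (T, F) := by
  obtain ⟨L, hL, hLF⟩ := exists_foldl_Ff_f0_eq i (P.foldl (fun E k => Ff N (f0 N) k E) E) F
  refine ⟨L, hL, ?_⟩
  rw [Function.iterate_add_apply]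
  exact (congrArg _ (iterate_Gf_append_stream _ _ _ _)).trans
    ((iterate_Gf_append_stream _ _ _ _).trans (congrArg (Prod.mk T) hLF))

end

theorem Gf0_transitive_general (N : ℕ) :
    ∀ (x y : (ℕ → Fin N) × (Fin N → Bool)) (ε₁ ε₂ : ℝ), 0 < ε₁ → 0 < ε₂ →
      ∃ k > 0, ∃ z : (ℕ → Fin N) × (Fin N → Bool),
        dX N x z < ε₁ ∧ dX N ((Gf N (f0 N))^[k] z) y < ε₂ := by
  rintro ⟨S, E⟩ ⟨T, F⟩ ε₁ ε₂ hε₁ hε₂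
  obtain ⟨n, hn⟩ := exists_pow_lt_of_lt_one hε₁ (by norm_num : (1 / 10 : ℝ) < 1)
  obtain ⟨L, hL, hiter⟩ := exists_iterate_Gf_f0_append_stream_eq (take n S) (S 0) E T F
  refine ⟨L.length + (take n S).length, by simp [List.length_pos_iff, hL],
    (take n S ++ₛ (L ++ₛ T), E), ?_, by rwa [hiter, dX_self]⟩
  calc dX N (S, E) (take n S ++ₛ (L ++ₛ T), E) = ds N S (take n S ++ₛ (L ++ₛ T)) := by
        simp [dX, de]
    _ ≤ (1 / 10) ^ n := ds_le_of_forall_lt_eq fun k hk => (get_take_append_stream hk _ _).symm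
    _ < ε₁ := hn

/-- `G_{f_0}` is topologically transitive on `(X,d)`: formulated via metric balls
(every nonempty open set contains a ball, so this is equivalent to the
open-sets formulation). -/
theorem Gf0_transitive (N : ℕ) (hN : 1 ≤ N) :
    ∀ (x y : (ℕ → Fin N) × (Fin N → Bool)) (ε₁ ε₂ : ℝ), 0 < ε₁ → 0 < ε₂ →
      ∃ k > 0, ∃ z : (ℕ → Fin N) × (Fin N → Bool),
        dX N x z < ε₁ ∧ dX N ((Gf N (f0 N))^[k] z) y < ε₂ :=
  Gf0_transitive_general N
end

section
/- For the vectorial boolean negation f_0, the set of periodic points of G_{f_0} is dense in (X,d) (i.e., the system is regular). -/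
open Finset

/-- State after applying the first `q` flips dictated by strategy `T`. -/
def flipState (N : ℕ) : ℕ → (ℕ → Fin N) → (Fin N → Bool) → (Fin N → Bool)
  | 0, _, E => E
  | (q+1), T, E => Ff N (f0 N) (T q) (flipState N q T E)

lemma Ff0_comm (N : ℕ) (k l : Fin N) (E : Fin N → Bool) :
    Ff N (f0 N) k (Ff N (f0 N) l E) = Ff N (f0 N) l (Ff N (f0 N) k E) := by
  funext j
  simp only [Ff, f0]
  by_cases h1 : j = k <;> by_cases h2 : j = l <;> subst_vars <;> simp_all

lemma Ff0_invol (N : ℕ) (k : Fin N) (E : Fin N → Bool) :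
    Ff N (f0 N) k (Ff N (f0 N) k E) = E := by
  funext j
  simp only [Ff, f0]
  by_cases h : j = k <;> simp [h]

lemma flipState_comm (N q : ℕ) (T : ℕ → Fin N) (k : Fin N) (E : Fin N → Bool) :
    flipState N q T (Ff N (f0 N) k E) = Ff N (f0 N) k (flipState N q T E) := by
  induction q with
  | zero => rfl
  | succ q ih => simp [flipState, ih, Ff0_comm]

lemma flipState_invol (N q : ℕ) (T : ℕ → Fin N) (E : Fin N → Bool) :
    flipState N q T (flipState N q T E) = E := by
  induction q with
  | zero => rfl
  | succ q ih =>
    show Ff N (f0 N) (T q) (flipState N q T (Ff N (f0 N) (T q) (flipState N q T E))) = E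
    rw [flipState_comm, Ff0_invol, ih]

lemma flipState_add (N a b : ℕ) (T : ℕ → Fin N) (E : Fin N → Bool) :
    flipState N (a + b) T E = flipState N b (fun m => T (m + a)) (flipState N a T E) := by
  induction b with
  | zero => rfl
  | succ b ih =>
    show Ff N (f0 N) (T (a + b)) (flipState N (a + b) T E) =
      Ff N (f0 N) ((fun m => T (m + a)) b) (flipState N b (fun m => T (m + a)) (flipState N a T E))
    rw [ih, Nat.add_comm a b]

lemma Gf0_iter_eq (N q : ℕ) (T : ℕ → Fin N) (E : Fin N → Bool) :
    (Gf N (f0 N))^[q] (T, E) = (fun m => T (m + q), flipState N q T E) := by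
  induction q with
  | zero => simp [flipState]
  | succ q ih =>
    rw [Function.iterate_succ_apply', ih]
    unfold Gf
    refine Prod.ext ?_ ?_
    · funext m
      show T (m + 1 + q) = T (m + (q + 1))
      congr 1
      omega
    · show Ff N (f0 N) (T (0 + q)) (flipState N q T E) = flipState N (q + 1) T E
      simp [flipState]

/-- The set of periodic points of `G_{f_0}` is dense in `(X,d)`. -/
theorem Gf0_regular (N : ℕ) (hN : 1 ≤ N) :
    ∀ x : (ℕ → Fin N) × (Fin N → Bool), ∀ ε > (0 : ℝ),
      ∃ p : (ℕ → Fin N) × (Fin N → Bool),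
        (∃ q ≥ 1, (Gf N (f0 N))^[q] p = p) ∧ dX N x p < ε := by
  rintro ⟨S, E⟩ ε hε
  have hNpos : (0 : ℝ) < N := by exact_mod_cast hN
  obtain ⟨n0, hn0⟩ := exists_pow_lt_of_lt_one hε (show (1:ℝ)/10 < 1 by norm_num)
  set n := max n0 1 with hn_def
  have hn1 : 1 ≤ n := le_max_right _ _
  have hpow : ((1:ℝ)/10) ^ n < ε :=
    lt_of_le_of_lt
      (pow_le_pow_of_le_one (by norm_num) (by norm_num) (le_max_left _ _)) hn0
  set T : ℕ → Fin N := fun k => S (k % n) with hT_def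
  refine ⟨(T, E), ⟨2 * n, by omega, ?_⟩, ?_⟩
  · rw [Gf0_iter_eq]
    refine Prod.ext ?_ ?_
    · funext m
      show S ((m + 2 * n) % n) = S (m % n)
      congr 1
      exact Nat.add_mul_mod_self_right m 2 n
    · show flipState N (2 * n) T E = E
      have h2 : 2 * n = n + n := by ring
      have hTshift : (fun m => T (m + n)) = T := by
        funext m
        show S ((m + n) % n) = S (m % n)
        congr 1
        exact Nat.add_mod_right m n
      rw [h2, flipState_add, hTshift, flipState_invol]
  · -- distance estimate
    set g : ℕ → ℝ := fun k => |((S k : ℕ) : ℝ) - ((T k : ℕ) : ℝ)| / 10 ^ (k + 1) with hg_def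
    set h : ℕ → ℝ := fun k => (N : ℝ) * ((1:ℝ)/10) ^ (k + 1) with hh_def
    have hg0 : ∀ k < n, g k = 0 := by
      intro k hk
      have : T k = S k := by
        show S (k % n) = S k
        rw [Nat.mod_eq_of_lt hk]
      simp [hg_def, this]
    have hgnonneg : ∀ k, 0 ≤ g k := by
      intro k; apply div_nonneg (abs_nonneg _); positivity
    have hgle : ∀ k, g k ≤ h k := by
      intro k
      have h1 : ((S k : ℕ) : ℝ) < N := by exact_mod_cast (S k).isLt
      have h2 : ((T k : ℕ) : ℝ) < N := by exact_mod_cast (T k).isLt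
      have h3 : (0:ℝ) ≤ ((S k : ℕ) : ℝ) := by positivity
      have h4 : (0:ℝ) ≤ ((T k : ℕ) : ℝ) := by positivity
      have habs : |((S k : ℕ) : ℝ) - ((T k : ℕ) : ℝ)| ≤ N := by
        rw [abs_le]; constructor <;> linarith
      have hhk : h k = (N : ℝ) / 10 ^ (k + 1) := by
        simp only [hh_def, div_pow, one_pow, mul_one_div]
      rw [hhk]
      show |((S k : ℕ) : ℝ) - ((T k : ℕ) : ℝ)| / 10 ^ (k + 1) ≤ (N : ℝ) / 10 ^ (k + 1)
      gcongr
    have hsum10 : Summable (fun k : ℕ => ((1:ℝ)/10) ^ (k + 1)) :=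
      (summable_nat_add_iff 1).mpr
        (summable_geometric_of_lt_one (by norm_num : (0:ℝ) ≤ 1/10) (by norm_num))
    have hsumh : Summable h := hsum10.mul_left _
    have hsumg : Summable g := Summable.of_nonneg_of_le hgnonneg hgle hsumh
    have htsum10 : ∑' k : ℕ, ((1:ℝ)/10) ^ (k + 1) = 1 / 9 := by
      have hgeo := tsum_geometric_of_lt_one (show (0:ℝ) ≤ 1/10 by norm_num)
        (show (1:ℝ)/10 < 1 by norm_num)
      have h2 : ∀ k : ℕ, ((1:ℝ)/10) ^ (k + 1) = ((1:ℝ)/10) ^ k * (1/10) := fun k => pow_succ _ _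
      rw [tsum_congr h2, tsum_mul_right, hgeo]
      norm_num
    -- tail estimate
    have hshift : ∀ k : ℕ, h (k + n) = ((N : ℝ) * ((1:ℝ)/10) ^ n) * ((1:ℝ)/10) ^ (k + 1) := by
      intro k
      have : k + n + 1 = n + (k + 1) := by omega
      rw [hh_def]
      simp only [this, pow_add]
      ring
    have htailh : ∑' k : ℕ, h (k + n) = (N : ℝ) * ((1:ℝ)/10) ^ n * (1/9) := by
      calc ∑' k : ℕ, h (k + n)
          = ∑' k : ℕ, ((N : ℝ) * ((1:ℝ)/10) ^ n) * ((1:ℝ)/10) ^ (k + 1) := by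
            exact tsum_congr hshift
        _ = ((N : ℝ) * ((1:ℝ)/10) ^ n) * ∑' k : ℕ, ((1:ℝ)/10) ^ (k + 1) := tsum_mul_left
        _ = (N : ℝ) * ((1:ℝ)/10) ^ n * (1/9) := by rw [htsum10]
    have htailg : ∑' k : ℕ, g (k + n) ≤ (N : ℝ) * ((1:ℝ)/10) ^ n * (1/9) := by
      rw [← htailh]
      exact Summable.tsum_le_tsum (fun k => hgle (k + n))
        ((summable_nat_add_iff n).mpr hsumg) ((summable_nat_add_iff n).mpr hsumh)
    have hhead : ∑ i ∈ Finset.range n, g i = 0 :=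
      Finset.sum_eq_zero fun i hi => hg0 i (Finset.mem_range.mp hi)
    have htsumg : ∑' k : ℕ, g k ≤ (N : ℝ) * ((1:ℝ)/10) ^ n * (1/9) := by
      rw [← Summable.sum_add_tsum_nat_add n hsumg, hhead, zero_add]
      exact htailg
    have hds : ds N S T ≤ ((1:ℝ)/10) ^ n := by
      have h9N : (0:ℝ) ≤ 9 / N := by positivity
      calc ds N S T = (9 / N) * ∑' k : ℕ, g k := rfl
        _ ≤ (9 / N) * ((N : ℝ) * ((1:ℝ)/10) ^ n * (1/9)) :=
            mul_le_mul_of_nonneg_left htsumg h9N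
        _ = ((1:ℝ)/10) ^ n := by field_simp
    have hde : (de N E E : ℝ) = 0 := by
      simp [de]
    have : dX N (S, E) (T, E) = ds N S T := by
      unfold dX; rw [hde]; ring_nf
    rw [this]
    exact lt_of_le_of_lt hds hpow
end
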